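/- arXiv:1912.00568 — 3 statements merged into one kernel-verified Lean document; each statement's English description precedes it below -/
import Mathlib

section
/- Let n ≥ 1 and let X_1, ..., X_n, X_{n+1} be i.i.d. real-valued random variables on a probability space (Ω, P) whose common distribution is atomless. Then the rank statistic K = #{t ∈ {1,...,n} : X_t ≥ X_{n+1}} is uniformly distributed on {0, 1, ..., n}; that is, P(K = k) = 1/(n+1) for every k ∈ {0, 1, ..., n}. -/
open MeasureTheory ProbabilityTheory
open scoped ENNReal

namespace RankAux

variable {n : ℕ}

/-- Count of indices `i` with `x i ≥ x j`. -/
noncomputable def cnt (j : Fin (n + 1)) (x : Fin (n + 1) → ℝ) : ℕ :=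
  (Finset.univ.filter (fun i => x i ≥ x j)).card

lemma cnt_measurable (j : Fin (n + 1)) : Measurable (fun x => cnt (n := n) j x) := by
  have h : (fun x : Fin (n + 1) → ℝ => cnt j x)
      = fun x => ∑ i : Fin (n + 1), if x i ≥ x j then 1 else 0 := by
    funext x; rw [cnt, Finset.card_filter]
  rw [h]
  exact Finset.measurable_sum _ (fun i _ =>
    Measurable.ite (measurableSet_le (measurable_pi_apply j) (measurable_pi_apply i))
      measurable_const measurable_const)

lemma cnt_pos (j : Fin (n + 1)) (x : Fin (n + 1) → ℝ) : 1 ≤ cnt j x := by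
  have : j ∈ Finset.univ.filter (fun i => x i ≥ x j) := by simp
  exact Finset.card_pos.mpr ⟨j, this⟩

lemma cnt_le (j : Fin (n + 1)) (x : Fin (n + 1) → ℝ) : cnt j x ≤ n + 1 := by
  calc cnt j x ≤ (Finset.univ : Finset (Fin (n + 1))).card := Finset.card_filter_le _ _
  _ = n + 1 := by simp

lemma cnt_injective {x : Fin (n + 1) → ℝ} (hx : Function.Injective x) :
    Function.Injective (fun j => cnt j x) := by
  intro a b hab
  simp only at hab
  by_contra hne
  have hxne : x a ≠ x b := fun h => hne (hx h)
  have key : ∀ c d : Fin (n + 1), x c < x d → cnt d x < cnt c x := by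
    intro c d hcd
    apply Finset.card_lt_card
    constructor
    · intro i hi
      simp only [Finset.mem_filter, Finset.mem_univ, true_and] at hi ⊢
      exact le_trans (le_of_lt hcd) hi
    · intro hsub
      have hc : c ∈ Finset.univ.filter (fun i => x i ≥ x c) := by simp
      have := hsub hc
      simp only [Finset.mem_filter, Finset.mem_univ, true_and] at this
      exact absurd this (not_le.mpr hcd)
  rcases lt_or_gt_of_ne hxne with h | h
  · exact absurd hab (Nat.ne_of_gt (key a b h))
  · exact absurd hab (Nat.ne_of_lt (key b a h))

lemma cnt_surjective {x : Fin (n + 1) → ℝ} (hx : Function.Injective x)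
    {m : ℕ} (h1 : 1 ≤ m) (h2 : m ≤ n + 1) : ∃ j, cnt j x = m := by
  have himg : Finset.image (fun j => cnt j x) Finset.univ = Finset.Icc 1 (n + 1) := by
    apply Finset.eq_of_subset_of_card_le
    · intro m hm
      simp only [Finset.mem_image, Finset.mem_univ, true_and] at hm
      obtain ⟨j, rfl⟩ := hm
      exact Finset.mem_Icc.mpr ⟨cnt_pos j x, cnt_le j x⟩
    · rw [Nat.card_Icc, Finset.card_image_of_injective _ (cnt_injective hx),
        Finset.card_univ, Fintype.card_fin]
      omega
  have : m ∈ Finset.image (fun j => cnt j x) Finset.univ := by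
    rw [himg]; exact Finset.mem_Icc.mpr ⟨h1, h2⟩
  simpa using this

lemma cnt_perm (σ : Equiv.Perm (Fin (n + 1))) (j : Fin (n + 1)) (x : Fin (n + 1) → ℝ) :
    cnt (σ j) ((MeasurableEquiv.piCongrLeft (fun _ => ℝ) σ) x) = cnt j x := by
  classical
  set T := MeasurableEquiv.piCongrLeft (fun _ : Fin (n + 1) => ℝ) σ with hT
  have hTa : ∀ i, T x (σ i) = x i := fun i =>
    MeasurableEquiv.piCongrLeft_apply_apply (β := fun _ => ℝ) σ x i
  unfold cnt
  have hset : Finset.univ.filter (fun i => T x i ≥ T x (σ j))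
      = Finset.map σ.toEmbedding (Finset.univ.filter (fun i => x i ≥ x j)) := by
    ext i
    simp only [Finset.mem_filter, Finset.mem_univ, true_and, Finset.mem_map,
      Equiv.coe_toEmbedding]
    constructor
    · intro hi
      refine ⟨σ.symm i, ?_, Equiv.apply_symm_apply σ i⟩
      have : T x (σ (σ.symm i)) ≥ T x (σ j) := by rw [Equiv.apply_symm_apply]; exact hi
      rwa [hTa, hTa] at this
    · rintro ⟨i', hi', rfl⟩
      rw [hTa, hTa]; exact hi'
  rw [hset, Finset.card_map]

lemma cnt_last (x : Fin (n + 1) → ℝ) :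
    cnt (Fin.last n) x
      = (Finset.univ.filter (fun t : Fin n => x t.castSucc ≥ x (Fin.last n))).card + 1 := by
  classical
  unfold cnt
  rw [Fin.univ_castSuccEmb, Finset.filter_cons]
  simp only [le_refl, ge_iff_le, if_pos]
  rw [Finset.card_cons, Finset.filter_map, Finset.card_map]
  rfl

end RankAux

open RankAux

/-- If `X 0, …, X (n-1), X n` are i.i.d. real-valued random variables with atomless
common distribution `μ`, then the rank statistic
`K ω = #{t ∈ {0,…,n-1} : X t ω ≥ X n ω}` is uniformly distributed on `{0,…,n}`:
`P(K = k) = 1/(n+1)` for every `k ≤ n`. -/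
theorem rank_statistic_uniform
    {Ω : Type*} [MeasurableSpace Ω] (P : Measure Ω) [IsProbabilityMeasure P]
    (n : ℕ) (hn : 1 ≤ n)
    (X : Fin (n + 1) → Ω → ℝ)
    (hmeas : ∀ i, Measurable (X i))
    (hindep : iIndepFun X P)
    (μ : Measure ℝ)
    (hid : ∀ i, Measure.map (X i) P = μ)
    (hatomless : ∀ x : ℝ, μ {x} = 0)
    (K : Ω → ℕ)
    (hK : ∀ ω, K ω =
      (Finset.univ.filter (fun t : Fin n => X t.castSucc ω ≥ X (Fin.last n) ω)).card) :
    ∀ k : ℕ, k ≤ n → P {ω | K ω = k} = 1 / (n + 1 : ℝ≥0∞) := by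
  classical
  intro k hk
  have hμprob : IsProbabilityMeasure μ := by
    rw [← hid 0]; exact Measure.isProbabilityMeasure_map (hmeas 0).aemeasurable
  set ν : Measure (Fin (n + 1) → ℝ) := Measure.pi (fun _ => μ) with hν
  have hνprob : IsProbabilityMeasure ν := by infer_instance
  set J : Ω → (Fin (n + 1) → ℝ) := fun ω i => X i ω with hJ
  have hJmeas : Measurable J := measurable_pi_lambda _ hmeas
  -- joint law is the product measure
  have hmap : Measure.map J P = ν := by
    refine (Measure.pi_eq fun s hs => ?_).symm
    rw [Measure.map_apply hJmeas (MeasurableSet.univ_pi hs)]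
    have hpre : J ⁻¹' Set.pi Set.univ s = ⋂ i, X i ⁻¹' s i := by
      ext ω; simp [hJ, Set.mem_pi]
    rw [hpre]
    have h1 : P (⋂ i ∈ (Finset.univ : Finset (Fin (n + 1))), X i ⁻¹' s i)
        = ∏ i ∈ (Finset.univ : Finset (Fin (n + 1))), P (X i ⁻¹' s i) :=
      hindep.measure_inter_preimage_eq_mul Finset.univ (fun i _ => hs i)
    simp only [Finset.mem_univ, Set.iInter_true] at h1
    rw [h1]
    refine Finset.prod_congr rfl fun i _ => ?_
    rw [← hid i, Measure.map_apply (hmeas i) (hs i)]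
  -- a.s. all values are distinct
  have hpair : ∀ i j : Fin (n + 1), i ≠ j → P {ω | X i ω = X j ω} = 0 := by
    intro i j hij
    have hind : IndepFun (X i) (X j) P := hindep.indepFun hij
    have hprod : Measure.map (fun ω => (X i ω, X j ω)) P
        = (Measure.map (X i) P).prod (Measure.map (X j) P) :=
      (indepFun_iff_map_prod_eq_prod_map_map (hmeas i).aemeasurable
        (hmeas j).aemeasurable).mp hind
    rw [hid i, hid j] at hprod
    have hdiag : MeasurableSet {p : ℝ × ℝ | p.1 = p.2} :=
      measurableSet_eq_fun measurable_fst measurable_snd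
    have hset : {ω | X i ω = X j ω}
        = (fun ω => (X i ω, X j ω)) ⁻¹' {p : ℝ × ℝ | p.1 = p.2} := rfl
    rw [hset, ← Measure.map_apply ((hmeas i).prodMk (hmeas j)) hdiag, hprod,
      Measure.prod_apply hdiag]
    have : ∀ a : ℝ, μ (Prod.mk a ⁻¹' {p : ℝ × ℝ | p.1 = p.2}) = 0 := by
      intro a
      have : Prod.mk a ⁻¹' {p : ℝ × ℝ | p.1 = p.2} = {a} := by
        ext b; simp [eq_comm]
      rw [this]; exact hatomless a
    simp [this, hatomless]
  -- the set of injective vectors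
  set D : Set (Fin (n + 1) → ℝ) :=
    (⋃ i, ⋃ j, ⋃ (_ : i ≠ j), {x : Fin (n + 1) → ℝ | x i = x j})ᶜ with hD
  have hDmeas : MeasurableSet D := by
    apply MeasurableSet.compl
    refine MeasurableSet.iUnion fun i => MeasurableSet.iUnion fun j =>
      MeasurableSet.iUnion fun _ =>
        measurableSet_eq_fun (measurable_pi_apply i) (measurable_pi_apply j)
  have hDinj : ∀ x, x ∈ D ↔ Function.Injective x := by
    intro x
    simp only [hD, Set.mem_compl_iff, Set.mem_iUnion, Set.mem_setOf_eq, not_exists]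
    constructor
    · intro h a b hab
      by_contra hne
      exact h a b hne hab
    · intro h a b hne hab
      exact hne (h hab)
  have hDc : ν Dᶜ = 0 := by
    rw [hD, compl_compl]
    refine measure_iUnion_null fun i => measure_iUnion_null fun j => measure_iUnion_null fun hij => ?_
    have hmeasset : MeasurableSet {x : Fin (n + 1) → ℝ | x i = x j} :=
      measurableSet_eq_fun (measurable_pi_apply i) (measurable_pi_apply j)
    rw [← hmap, Measure.map_apply hJmeas hmeasset]
    exact hpair i j hij
  have hDone : ν D = 1 := by
    have := measure_add_measure_compl (μ := ν) hDmeas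
    rw [hDc, add_zero] at this
    rw [this]; exact measure_univ
  -- the events
  set A : Fin (n + 1) → Set (Fin (n + 1) → ℝ) := fun j => {x | cnt j x = k + 1} with hA
  have hAmeas : ∀ j, MeasurableSet (A j) := fun j =>
    (cnt_measurable j) (MeasurableSet.singleton (k + 1))
  set B : Fin (n + 1) → Set (Fin (n + 1) → ℝ) := fun j => A j ∩ D with hB
  have hBmeas : ∀ j, MeasurableSet (B j) := fun j => (hAmeas j).inter hDmeas
  -- B's are pairwise disjoint and cover D
  have hBdisj : Pairwise (Function.onFun Disjoint B) := by
    intro a b hab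
    rw [Function.onFun, Set.disjoint_left]
    intro x hxa hxb
    obtain ⟨ha, hd⟩ := hxa
    obtain ⟨hb, _⟩ := hxb
    have hinj := (hDinj x).mp hd
    exact hab (cnt_injective hinj (by
      show cnt a x = cnt b x
      rw [ha, hb]))
  have hBcover : (⋃ j, B j) = D := by
    ext x
    simp only [Set.mem_iUnion, hB, Set.mem_inter_iff]
    constructor
    · rintro ⟨j, _, hd⟩; exact hd
    · intro hd
      obtain ⟨j, hj⟩ := cnt_surjective ((hDinj x).mp hd) (Nat.le_add_left 1 k)
        (by omega)
      exact ⟨j, hj, hd⟩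
  -- all A j have the same measure
  have hAeq : ∀ j, ν (A j) = ν (A (Fin.last n)) := by
    intro j
    set σ : Equiv.Perm (Fin (n + 1)) := Equiv.swap j (Fin.last n) with hσ
    have hpres : MeasurePreserving (MeasurableEquiv.piCongrLeft (fun _ => ℝ) σ) ν ν :=
      measurePreserving_piCongrLeft (fun _ : Fin (n + 1) => μ) σ
    have hσj : σ j = Fin.last n := Equiv.swap_apply_left _ _
    have hpre : (MeasurableEquiv.piCongrLeft (fun _ => ℝ) σ) ⁻¹' (A (Fin.last n)) = A j := by
      ext x
      simp only [Set.mem_preimage, hA, Set.mem_setOf_eq]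
      rw [← hσj, cnt_perm]
    rw [← hpre]
    exact hpres.measure_preimage (hAmeas (Fin.last n)).nullMeasurableSet
  -- ν (B j) = ν (A j)
  have hBA : ∀ j, ν (B j) = ν (A j) := by
    intro j
    refine le_antisymm (measure_mono Set.inter_subset_left) ?_
    calc ν (A j) ≤ ν (A j ∩ D) + ν (A j \ D) := measure_le_inter_add_diff _ _ _
    _ ≤ ν (B j) + ν Dᶜ := add_le_add le_rfl (measure_mono fun x hx => hx.2)
    _ = ν (B j) := by rw [hDc, add_zero]
  -- summing up
  have hsum : ∑ j : Fin (n + 1), ν (B j) = 1 := by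
    rw [← tsum_fintype (L := SummationFilter.unconditional _), ← measure_iUnion hBdisj hBmeas, hBcover, hDone]
  have hconst : ∑ j : Fin (n + 1), ν (B j)
      = (n + 1 : ℝ≥0∞) * ν (A (Fin.last n)) := by
    have : ∀ j : Fin (n + 1), ν (B j) = ν (A (Fin.last n)) := fun j => by
      rw [hBA j, hAeq j]
    rw [Finset.sum_congr rfl (fun j _ => this j), Finset.sum_const, Finset.card_univ,
      Fintype.card_fin, nsmul_eq_mul]
    push_cast
    ring
  have hlast : ν (A (Fin.last n)) = 1 / (n + 1 : ℝ≥0∞) := by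
    have h1 : (n + 1 : ℝ≥0∞) * ν (A (Fin.last n)) = 1 := by rw [← hconst, hsum]
    have hne : (n + 1 : ℝ≥0∞) ≠ 0 := by
      intro h
      rw [add_eq_zero] at h
      exact one_ne_zero h.2
    have hnetop : (n + 1 : ℝ≥0∞) ≠ ⊤ :=
      ENNReal.add_ne_top.mpr ⟨ENNReal.natCast_ne_top n, ENNReal.one_ne_top⟩
    rw [ENNReal.eq_div_iff hne hnetop, h1]
  -- transfer back to Ω
  have hevent : {ω | K ω = k} = J ⁻¹' (A (Fin.last n)) := by
    ext ω
    simp only [Set.mem_setOf_eq, Set.mem_preimage, hA, Set.mem_setOf_eq]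
    rw [hK ω, cnt_last]
    simp only [hJ]
    omega
  rw [hevent, ← Measure.map_apply hJmeas (hAmeas (Fin.last n)), hmap]
  exact hlast
end

section
/- Let T_0 ≥ 1 and let S_1, ..., S_{T_0}, Ŝ be i.i.d. real-valued random variables with atomless common distribution, and define the Andrews p-value p = (1/T_0) · #{t ∈ {1,...,T_0} : S_t ≥ Ŝ}. Then for every τ ∈ [0,1], P(p ≤ τ) = (⌊τ·T_0⌋ + 1)/(T_0 + 1). -/
open MeasureTheory ProbabilityTheory
open scoped ENNReal

namespace AndrewsAux

/-- The strict rank: number of coordinates strictly above `v i`. -/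
noncomputable def rk {n : ℕ} (v : Fin n → ℝ) (i : Fin n) : ℕ :=
  (Finset.univ.filter fun t => v i < v t).card

lemma rk_lt {n : ℕ} (v : Fin n → ℝ) (i : Fin n) : rk v i < n := by
  have h : (Finset.univ.filter fun t => v i < v t) ⊂ Finset.univ := by
    rw [Finset.ssubset_univ_iff]
    intro h
    have hi := Finset.mem_univ i
    rw [← h, Finset.mem_filter] at hi
    exact lt_irrefl _ hi.2
  simpa [rk] using Finset.card_lt_card h

lemma rk_lt_of_lt {n : ℕ} {v : Fin n → ℝ} {i j : Fin n} (h : v i < v j) :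
    rk v j < rk v i := by
  apply Finset.card_lt_card
  rw [Finset.ssubset_iff_of_subset]
  · exact ⟨j, by simp [h], by simp⟩
  · intro t ht
    simp only [Finset.mem_filter, Finset.mem_univ, true_and] at *
    exact h.trans ht

lemma rk_injective {n : ℕ} {v : Fin n → ℝ} (hv : Function.Injective v) :
    Function.Injective (rk v) := by
  intro a b hab
  by_contra hne
  have hvab : v a ≠ v b := fun h => hne (hv h)
  rcases hvab.lt_or_gt with h | h
  · exact (rk_lt_of_lt h).ne' hab
  · exact (rk_lt_of_lt h).ne hab

lemma exists_rk_eq {n : ℕ} {v : Fin n → ℝ} (hv : Function.Injective v)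
    {j : ℕ} (hj : j < n) : ∃ i, rk v i = j := by
  have hinj : Function.Injective (fun i : Fin n => (⟨rk v i, rk_lt v i⟩ : Fin n)) := by
    intro a b hab
    exact rk_injective hv (congrArg Fin.val hab)
  obtain ⟨i, hi⟩ := Finite.surjective_of_injective hinj ⟨j, hj⟩
  exact ⟨i, congrArg Fin.val hi⟩

lemma measurable_rk {n : ℕ} (i : Fin n) : Measurable fun v : Fin n → ℝ => rk v i := by
  simp only [rk, Finset.card_filter]
  exact Finset.measurable_sum _ fun t _ =>
    Measurable.ite (measurableSet_lt (measurable_pi_apply i) (measurable_pi_apply t))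
      measurable_const measurable_const

lemma rk_comp_perm {n : ℕ} (v : Fin n → ℝ) (e : Equiv.Perm (Fin n)) (i : Fin n) :
    rk (v ∘ e) i = rk v (e i) := by
  simp only [rk]
  apply Finset.card_bij (fun t _ => e t)
  · intro t ht
    simp only [Finset.mem_filter, Finset.mem_univ, true_and, Function.comp_apply] at *
    exact ht
  · intro a _ b _ h
    exact e.injective h
  · intro s hs
    simp only [Finset.mem_filter, Finset.mem_univ, true_and] at hs
    exact ⟨e.symm s, by simpa using hs, by simp⟩

lemma count_eq_rk {T₀ : ℕ} {v : Fin (T₀ + 1) → ℝ} (hv : Function.Injective v) :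
    (Finset.univ.filter
      (fun t : Fin T₀ => v t.castSucc ≥ v (Fin.last T₀))).card = rk v (Fin.last T₀) := by
  simp only [rk]
  apply Finset.card_bij (fun t _ => t.castSucc)
  · intro t ht
    simp only [Finset.mem_filter, Finset.mem_univ, true_and, ge_iff_le] at *
    have hne : v t.castSucc ≠ v (Fin.last T₀) := fun h =>
      (Fin.castSucc_lt_last t).ne (hv h)
    exact lt_of_le_of_ne ht (Ne.symm hne)
  · intro a _ b _ h
    exact Fin.castSucc_injective _ h
  · intro i hi
    simp only [Finset.mem_filter, Finset.mem_univ, true_and] at hi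
    have hne : i ≠ Fin.last T₀ := by
      rintro rfl; exact lt_irrefl _ hi
    obtain ⟨t, rfl⟩ := Fin.exists_castSucc_eq.mpr hne
    exact ⟨t, by simp [le_of_lt hi], rfl⟩

end AndrewsAux

open AndrewsAux

/-- Let `S 0, …, S (T₀-1)` be the pre-treatment statistics and `Shat = S (Fin.last T₀)`
the post-treatment statistic, all i.i.d. with atomless common distribution `μ`.  With the
Andrews p-value `p ω = (1/T₀) · #{t : S t ω ≥ Shat ω}`, for every `τ ∈ [0,1]`,
`P(p ≤ τ) = (⌊τ·T₀⌋ + 1)/(T₀ + 1)`. -/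
theorem andrews_pvalue_distribution
    {Ω : Type*} [MeasurableSpace Ω] (P : Measure Ω) [IsProbabilityMeasure P]
    (T₀ : ℕ) (hT₀ : 1 ≤ T₀)
    (S : Fin (T₀ + 1) → Ω → ℝ)
    (hmeas : ∀ i, Measurable (S i))
    (hindep : iIndepFun S P)
    (μ : Measure ℝ)
    (hid : ∀ i, Measure.map (S i) P = μ)
    (hatomless : ∀ x : ℝ, μ {x} = 0)
    (p : Ω → ℝ)
    (hp : ∀ ω, p ω =
      ((Finset.univ.filter
        (fun t : Fin T₀ => S t.castSucc ω ≥ S (Fin.last T₀) ω)).card : ℝ) / T₀)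
    (τ : ℝ) (hτ0 : 0 ≤ τ) (hτ1 : τ ≤ 1) :
    P {ω | p ω ≤ τ} = ((⌊τ * T₀⌋₊ : ℝ≥0∞) + 1) / (T₀ + 1 : ℝ≥0∞) := by
  classical
  -- the joint random vector
  set X : Ω → (Fin (T₀ + 1) → ℝ) := fun ω i => S i ω with hX
  have hXmeas : Measurable X := measurable_pi_iff.mpr hmeas
  have hμprob : IsProbabilityMeasure μ := by
    constructor
    rw [← hid 0, Measure.map_apply (hmeas 0) MeasurableSet.univ]
    simp
  -- the joint law is the product measure
  set π : Measure (Fin (T₀ + 1) → ℝ) := Measure.pi (fun _ => μ) with hπ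
  have hmap : Measure.map X P = π := by
    refine (Measure.pi_eq fun s hs => ?_).symm
    rw [Measure.map_apply hXmeas (MeasurableSet.univ_pi hs)]
    have hpre : X ⁻¹' (Set.pi Set.univ s) = ⋂ i ∈ Finset.univ, S i ⁻¹' s i := by
      ext ω
      simp [Set.mem_pi, hX]
    rw [hpre, hindep.measure_inter_preimage_eq_mul Finset.univ (fun i _ => hs i)]
    refine Finset.prod_congr rfl fun i _ => ?_
    rw [← hid i, Measure.map_apply (hmeas i) (hs i)]
  -- pairwise, coordinates are a.s. distinct
  have hpair : ∀ i j : Fin (T₀ + 1), i ≠ j → P {ω | S i ω = S j ω} = 0 := by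
    intro i j hij
    have hind : IndepFun (S i) (S j) P := hindep.indepFun hij
    have hmp : Measure.map (fun ω => (S i ω, S j ω)) P = μ.prod μ := by
      rw [(indepFun_iff_map_prod_eq_prod_map_map (hmeas i).aemeasurable
        (hmeas j).aemeasurable).mp hind, hid i, hid j]
    have hdiag : MeasurableSet {q : ℝ × ℝ | q.1 = q.2} :=
      measurableSet_eq_fun measurable_fst measurable_snd
    have : P {ω | S i ω = S j ω} = (μ.prod μ) {q : ℝ × ℝ | q.1 = q.2} := by
      rw [← hmp, Measure.map_apply ((hmeas i).prodMk (hmeas j)) hdiag]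
      rfl
    rw [this, Measure.prod_apply hdiag]
    have : ∀ x : ℝ, (Prod.mk x ⁻¹' {q : ℝ × ℝ | q.1 = q.2}) = {x} := by
      intro x; ext y; simp [eq_comm]
    simp only [this, hatomless]
    simp
  -- a.s. injectivity on Ω
  have hinjΩ : ∀ᵐ ω ∂P, Function.Injective (X ω) := by
    rw [ae_iff]
    have hsub : {ω | ¬ Function.Injective (X ω)} ⊆
        ⋃ (i : Fin (T₀ + 1)) (j : Fin (T₀ + 1)) (_ : i ≠ j), {ω | S i ω = S j ω} := by
      intro ω hω
      simp only [Function.Injective, not_forall] at hω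
      obtain ⟨i, j, hvij, hij⟩ := hω
      simp only [Set.mem_iUnion]
      exact ⟨i, j, hij, hvij⟩
    refine measure_mono_null hsub ?_
    refine measure_iUnion_null fun i => measure_iUnion_null fun j =>
      measure_iUnion_null fun hij => hpair i j hij
  -- measurable sets of given rank
  set B : Fin (T₀ + 1) → ℕ → Set (Fin (T₀ + 1) → ℝ) := fun i j => {v | rk v i = j} with hB
  have hBmeas : ∀ i j, MeasurableSet (B i j) := fun i j =>
    measurable_rk i (measurableSet_singleton j)
  -- the injectivity set on the product side
  set D : Set (Fin (T₀ + 1) → ℝ) := {v | Function.Injective v} with hD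
  have hDmeas : MeasurableSet D := by
    have : D = ⋂ (i : Fin (T₀ + 1)) (j : Fin (T₀ + 1)) (_ : i ≠ j), {v | v i = v j}ᶜ := by
      ext v
      simp only [hD, Set.mem_iInter, Set.mem_compl_iff, Set.mem_setOf_eq]
      constructor
      · intro hv i j hij h; exact hij (hv h)
      · intro h a b hab
        by_contra hne
        exact h a b hne hab
    rw [this]
    exact MeasurableSet.iInter fun i => MeasurableSet.iInter fun j =>
      MeasurableSet.iInter fun _ =>
        (measurableSet_eq_fun (measurable_pi_apply i) (measurable_pi_apply j)).compl
  have hDcompl : π Dᶜ = 0 := by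
    rw [← hmap, Measure.map_apply hXmeas hDmeas.compl]
    have : X ⁻¹' Dᶜ = {ω | ¬ Function.Injective (X ω)} := rfl
    rw [this]
    exact ae_iff.mp hinjΩ
  have hDone : π D = 1 := by
    have h := measure_add_measure_compl (μ := π) hDmeas
    rw [hDcompl, add_zero] at h
    simpa using h
  -- symmetry: each rank set has the same measure as the one at `last`
  have hsymm : ∀ (i : Fin (T₀ + 1)) (j : ℕ), π (B i j) = π (B (Fin.last T₀) j) := by
    intro i j
    set e : Equiv.Perm (Fin (T₀ + 1)) := Equiv.swap i (Fin.last T₀) with he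
    have hmp : MeasurePreserving (MeasurableEquiv.piCongrLeft (fun _ : Fin (T₀ + 1) => ℝ) e.symm)
        π π := measurePreserving_piCongrLeft (fun _ : Fin (T₀ + 1) => μ) e.symm
    have happ : ∀ v : Fin (T₀ + 1) → ℝ,
        (MeasurableEquiv.piCongrLeft (fun _ : Fin (T₀ + 1) => ℝ) e.symm) v = v ∘ e := by
      intro v
      funext t
      have := MeasurableEquiv.piCongrLeft_apply_apply
        (β := fun _ : Fin (T₀ + 1) => ℝ) e.symm v (e t)
      simpa using this
    have hpre : (MeasurableEquiv.piCongrLeft (fun _ : Fin (T₀ + 1) => ℝ) e.symm) ⁻¹'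
        (B (Fin.last T₀) j) = B i j := by
      ext v
      simp only [Set.mem_preimage, hB, Set.mem_setOf_eq, happ, rk_comp_perm]
      rw [he, Equiv.swap_apply_right]
    have hpp := hmp.measure_preimage
      (hBmeas (Fin.last T₀) j).nullMeasurableSet
    rw [hpre] at hpp
    exact hpp
  -- each rank value 0,…,T₀ occurs with probability 1/(T₀+1)
  have hunif : ∀ j : ℕ, j < T₀ + 1 → π (B (Fin.last T₀) j) = 1 / ((T₀ + 1 : ℕ) : ℝ≥0∞) := by
    intro j hj
    have hBD : ∀ i, π (B i j ∩ D) = π (B i j) := by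
      intro i
      have h1 : π (B i j ∩ D) + π (B i j \ D) = π (B i j) :=
        measure_inter_add_diff _ hDmeas
      have h2 : π (B i j \ D) = 0 :=
        measure_mono_null (fun v hv => hv.2) hDcompl
      rw [← h1, h2, add_zero]
    have hdisj : Pairwise (Function.onFun Disjoint (fun i => B i j ∩ D)) := by
      intro a b hab
      simp only [Function.onFun, Set.disjoint_left]
      intro v hva hvb
      have h1 : rk v a = j := hva.1
      have h2 : rk v b = j := hvb.1
      exact hab (rk_injective hva.2 (h1.trans h2.symm))
    have hcover : (⋃ i, B i j ∩ D) = D := by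
      ext v
      simp only [Set.mem_iUnion, Set.mem_inter_iff]
      constructor
      · rintro ⟨i, _, hvD⟩; exact hvD
      · intro hvD
        obtain ⟨i, hi⟩ := exists_rk_eq hvD hj
        exact ⟨i, hi, hvD⟩
    have hsum : ∑' i : Fin (T₀ + 1), π (B i j ∩ D) = 1 := by
      rw [← measure_iUnion hdisj (fun i => (hBmeas i j).inter hDmeas), hcover, hDone]
    rw [tsum_fintype] at hsum
    have hconst : ∀ i : Fin (T₀ + 1), π (B i j ∩ D) = π (B (Fin.last T₀) j) := by
      intro i
      rw [hBD i, hsymm i j]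
    rw [Finset.sum_congr rfl (fun i _ => hconst i)] at hsum
    rw [Finset.sum_const, Finset.card_univ, Fintype.card_fin] at hsum
    rw [nsmul_eq_mul] at hsum
    rw [ENNReal.eq_div_iff (by simp) (by simp)]
    exact hsum
  -- the threshold
  set k : ℕ := ⌊τ * T₀⌋₊ with hk
  have hkT : k ≤ T₀ := by
    rw [hk]
    calc ⌊τ * T₀⌋₊ ≤ ⌊(T₀ : ℝ)⌋₊ := by
          apply Nat.floor_le_floor
          calc τ * T₀ ≤ 1 * T₀ := by
                apply mul_le_mul_of_nonneg_right hτ1 (by positivity)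
            _ = T₀ := one_mul _
      _ = T₀ := Nat.floor_natCast T₀
  -- the event, rewritten via ranks
  set C : Set (Fin (T₀ + 1) → ℝ) := {v | rk v (Fin.last T₀) ≤ k} with hC
  have hCmeas : MeasurableSet C :=
    measurable_rk (Fin.last T₀) (measurableSet_Iic (a := k))
  have hae : {ω | p ω ≤ τ} =ᵐ[P] X ⁻¹' C := by
    rw [Filter.eventuallyEq_set]
    filter_upwards [hinjΩ] with ω hω
    have hcnt : ((Finset.univ.filter
        (fun t : Fin T₀ => S t.castSucc ω ≥ S (Fin.last T₀) ω)).card : ℕ)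
        = rk (X ω) (Fin.last T₀) := by
      have := count_eq_rk (v := X ω) hω
      convert this using 2
    have hT₀pos : (0 : ℝ) < T₀ := by exact_mod_cast hT₀
    constructor
    · intro hωp
      simp only [Set.mem_setOf_eq, hp ω] at hωp
      simp only [Set.mem_preimage, hC, Set.mem_setOf_eq, ← hcnt]
      rw [div_le_iff₀ hT₀pos] at hωp
      rw [hk]
      exact Nat.le_floor (by rw [mul_comm] at hωp ⊢; exact_mod_cast hωp)
    · intro hωp
      simp only [Set.mem_preimage, hC, Set.mem_setOf_eq, ← hcnt] at hωp
      simp only [Set.mem_setOf_eq, hp ω]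
      rw [div_le_iff₀ hT₀pos]
      have : ((Finset.univ.filter
          (fun t : Fin T₀ => S t.castSucc ω ≥ S (Fin.last T₀) ω)).card : ℝ) ≤ τ * T₀ := by
        calc ((Finset.univ.filter
            (fun t : Fin T₀ => S t.castSucc ω ≥ S (Fin.last T₀) ω)).card : ℝ)
            ≤ (k : ℝ) := by exact_mod_cast hωp
          _ ≤ τ * T₀ := Nat.floor_le (by positivity)
      linarith [this]
  -- compute
  have hsplit : C = ⋃ j ∈ Finset.range (k + 1), B (Fin.last T₀) j := by
    ext v
    simp only [hC, hB, Set.mem_setOf_eq, Set.mem_iUnion, Finset.mem_range,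
      Nat.lt_succ_iff]
    constructor
    · intro h; exact ⟨rk v (Fin.last T₀), h, rfl⟩
    · rintro ⟨j, hj, rfl⟩; exact hj
  have hπC : π C = ((k : ℝ≥0∞) + 1) / ((T₀ + 1 : ℕ) : ℝ≥0∞) := by
    rw [hsplit, measure_biUnion_finset ?hd (fun j _ => hBmeas (Fin.last T₀) j)]
    case hd =>
      intro a ha b hb hab
      simp only [Set.disjoint_left]
      intro v hva hvb
      exact hab (hva.symm.trans hvb)
    have : ∀ j ∈ Finset.range (k + 1), π (B (Fin.last T₀) j) = 1 / ((T₀ + 1 : ℕ) : ℝ≥0∞) := by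
      intro j hj
      apply hunif
      rw [Finset.mem_range, Nat.lt_succ_iff] at hj
      omega
    rw [Finset.sum_congr rfl this, Finset.sum_const, Finset.card_range, nsmul_eq_mul]
    rw [mul_one_div]
    push_cast
    ring
  calc P {ω | p ω ≤ τ} = P (X ⁻¹' C) := measure_congr hae
    _ = π C := by rw [← hmap, Measure.map_apply hXmeas hCmeas]
    _ = ((k : ℝ≥0∞) + 1) / ((T₀ + 1 : ℕ) : ℝ≥0∞) := hπC
    _ = ((⌊τ * T₀⌋₊ : ℝ≥0∞) + 1) / (T₀ + 1 : ℝ≥0∞) := by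
        rw [hk]
        push_cast
        ring_nf
end

section
/- Let T_0 ≥ 1 and let S_1, ..., S_{T_0}, Ŝ be i.i.d. real-valued random variables with atomless common distribution, and define the Andrews p-value p = (1/T_0) · #{t ∈ {1,...,T_0} : S_t ≥ Ŝ}. Then for every significance level τ ∈ [0,1], the rejection probability satisfies |P(p ≤ τ) − τ| ≤ 1/(T_0 + 1). -/
open MeasureTheory ProbabilityTheory
open scoped ENNReal

section AndrewsAux
open Finset

open Finset

/-- rank of coordinate `j` in the vector `x` -/
private noncomputable def rnk {n : ℕ} (x : Fin n → ℝ) (j : Fin n) : ℕ :=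
  (Finset.univ.filter fun i => x i < x j).card

private lemma rnk_lt {n : ℕ} (x : Fin n → ℝ) (j : Fin n) : rnk x j < n := by
  have h : (Finset.univ.filter fun i => x i < x j) ⊂ Finset.univ := by
    rw [Finset.ssubset_univ_iff]
    intro h
    have := h ▸ Finset.mem_univ j
    rw [← h] at this
    simp at this
  simpa [rnk] using Finset.card_lt_card h

private lemma rnk_lt_rnk {n : ℕ} (x : Fin n → ℝ) {j j' : Fin n} (h : x j < x j') :
    rnk x j < rnk x j' := by
  apply Finset.card_lt_card
  constructor
  · intro i hi
    simp only [Finset.mem_filter, Finset.mem_univ, true_and] at hi ⊢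
    exact hi.trans h
  · intro hsub
    have := hsub (by simp [h] : j ∈ Finset.univ.filter fun i => x i < x j')
    simp at this

private lemma rnk_inj {n : ℕ} {x : Fin n → ℝ} (hx : Function.Injective x) :
    Function.Injective (rnk x) := by
  intro j j' h
  by_contra hne
  rcases lt_trichotomy (x j) (x j') with hlt | heq | hgt
  · exact absurd h (Nat.ne_of_lt (rnk_lt_rnk x hlt))
  · exact hne (hx heq)
  · exact absurd h.symm (Nat.ne_of_lt (rnk_lt_rnk x hgt))

private lemma rnk_surj {n : ℕ} {x : Fin n → ℝ} (hx : Function.Injective x)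
    {k : ℕ} (hk : k < n) : ∃ j, rnk x j = k := by
  have hg : Function.Injective (fun j => (⟨rnk x j, rnk_lt x j⟩ : Fin n)) := by
    intro a b hab
    exact rnk_inj hx (by simpa using congrArg Fin.val hab)
  obtain ⟨j, hj⟩ := Finite.surjective_of_injective hg ⟨k, hk⟩
  exact ⟨j, by simpa using congrArg Fin.val hj⟩

private lemma rnk_comp {n : ℕ} (x : Fin n → ℝ) (σ : Equiv.Perm (Fin n)) (j : Fin n) :
    rnk (x ∘ σ) j = rnk x (σ j) := by
  unfold rnk
  apply Finset.card_bij' (fun i _ => σ i) (fun i _ => σ.symm i) <;> simp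

/-- the Andrews count equals `T₀` minus the rank of the last coordinate -/
private lemma count_eq {T₀ : ℕ} (x : Fin (T₀ + 1) → ℝ) :
    (Finset.univ.filter
      (fun t : Fin T₀ => x t.castSucc ≥ x (Fin.last T₀))).card
      = T₀ - rnk x (Fin.last T₀) := by
  have hpart := Finset.card_filter_add_card_filter_not
    (s := (Finset.univ : Finset (Fin T₀)))
    (p := fun t : Fin T₀ => x t.castSucc ≥ x (Fin.last T₀))
  have hcard : (Finset.univ.filter
      (fun t : Fin T₀ => ¬ (x t.castSucc ≥ x (Fin.last T₀)))).card
      = rnk x (Fin.last T₀) := by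
    unfold rnk
    apply Finset.card_bij' (fun t _ => t.castSucc)
      (fun i hi => i.castPred (by
        intro hlast
        simp only [Finset.mem_filter, Finset.mem_univ, true_and] at hi
        rw [hlast] at hi; exact lt_irrefl _ hi))
    · intro t ht; simp
    · intro i hi; simp
    · intro t ht
      simp only [Finset.mem_filter, Finset.mem_univ, true_and, not_le] at ht ⊢
      exact ht
    · intro i hi
      simp only [Finset.mem_filter, Finset.mem_univ, true_and, not_le] at hi ⊢
      simpa using hi
  rw [hcard] at hpart
  have := rnk_lt x (Fin.last T₀)
  simp only [Finset.card_univ, Fintype.card_fin] at hpart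
  omega

private lemma rnk_le {T₀ : ℕ} (x : Fin (T₀ + 1) → ℝ) : rnk x (Fin.last T₀) ≤ T₀ :=
  Nat.lt_succ_iff.mp (rnk_lt x _)
end AndrewsAux


/-- With the Andrews p-value `p ω = (1/T₀) · #{t : S t ω ≥ Shat ω}` computed from i.i.d.
statistics with atomless common distribution, for every significance level `τ ∈ [0,1]` the
rejection probability satisfies `|P(p ≤ τ) − τ| ≤ 1/(T₀ + 1)`. -/
theorem andrews_test_size_bound
    {Ω : Type*} [MeasurableSpace Ω] (P : Measure Ω) [IsProbabilityMeasure P]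
    (T₀ : ℕ) (hT₀ : 1 ≤ T₀)
    (S : Fin (T₀ + 1) → Ω → ℝ)
    (hmeas : ∀ i, Measurable (S i))
    (hindep : iIndepFun S P)
    (μ : Measure ℝ)
    (hid : ∀ i, Measure.map (S i) P = μ)
    (hatomless : ∀ x : ℝ, μ {x} = 0)
    (p : Ω → ℝ)
    (hp : ∀ ω, p ω =
      ((Finset.univ.filter
        (fun t : Fin T₀ => S t.castSucc ω ≥ S (Fin.last T₀) ω)).card : ℝ) / T₀)
    (τ : ℝ) (hτ0 : 0 ≤ τ) (hτ1 : τ ≤ 1) :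
    |(P {ω | p ω ≤ τ}).toReal - τ| ≤ 1 / (T₀ + 1 : ℝ) := by
  classical
  haveI hμprob : IsProbabilityMeasure μ := by
    rw [← hid 0]; exact Measure.isProbabilityMeasure_map (hmeas 0).aemeasurable
  set ν : Measure (Fin (T₀ + 1) → ℝ) := Measure.pi (fun _ => μ) with hνdef
  haveI : IsProbabilityMeasure ν := by rw [hνdef]; infer_instance
  set J : Ω → (Fin (T₀ + 1) → ℝ) := fun ω i => S i ω with hJdef
  have hJmeas : Measurable J := measurable_pi_lambda _ hmeas
  -- joint law is the product measure
  have hmap : Measure.map J P = ν := by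
    refine (Measure.pi_eq fun s hs => ?_).symm
    rw [Measure.map_apply hJmeas (MeasurableSet.univ_pi hs)]
    have hpre : J ⁻¹' Set.pi Set.univ s = ⋂ i ∈ Finset.univ, S i ⁻¹' s i := by
      ext ω; simp [hJdef, Set.mem_pi]
    rw [hpre, hindep.measure_inter_preimage_eq_mul Finset.univ (fun i _ => hs i)]
    exact Finset.prod_congr rfl fun i _ => by
      rw [← hid i, Measure.map_apply (hmeas i) (hs i)]
  -- measurability of rank functions
  have hrnkmeas : ∀ j : Fin (T₀ + 1), Measurable fun x : Fin (T₀ + 1) → ℝ => rnk x j := by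
    intro j
    unfold rnk
    simp only [Finset.card_filter]
    exact Finset.measurable_sum _ fun i _ =>
      Measurable.ite (measurableSet_lt (measurable_pi_apply i) (measurable_pi_apply j))
        measurable_const measurable_const
  have hBmeas : ∀ (j : Fin (T₀ + 1)) (k : ℕ),
      MeasurableSet {x : Fin (T₀ + 1) → ℝ | rnk x j = k} :=
    fun j k => (hrnkmeas j) (measurableSet_singleton k)
  -- the set of injective vectors
  have hIeq : {x : Fin (T₀ + 1) → ℝ | Function.Injective x}ᶜ
      = ⋃ (i : Fin (T₀ + 1)) (j : Fin (T₀ + 1)) (_ : i ≠ j), {x | x i = x j} := by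
    ext x
    simp only [Set.mem_compl_iff, Set.mem_setOf_eq, Function.Injective, Set.mem_iUnion]
    constructor
    · intro h
      push_neg at h
      obtain ⟨i, j, hij, hne⟩ := h
      exact ⟨i, j, hne, hij⟩
    · rintro ⟨i, j, hne, hij⟩ h
      exact hne (h hij)
  have hImeas : MeasurableSet {x : Fin (T₀ + 1) → ℝ | Function.Injective x} := by
    rw [← compl_compl {x : Fin (T₀ + 1) → ℝ | Function.Injective x}, hIeq]
    exact (MeasurableSet.iUnion fun i => MeasurableSet.iUnion fun j =>
      MeasurableSet.iUnion fun _ =>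
        measurableSet_eq_fun (measurable_pi_apply i) (measurable_pi_apply j)).compl
  -- a.s. injectivity
  have hInull : ν {x : Fin (T₀ + 1) → ℝ | Function.Injective x}ᶜ = 0 := by
    rw [hIeq]
    refine measure_iUnion_null fun i => measure_iUnion_null fun j => measure_iUnion_null fun hij => ?_
    -- ν {x | x i = x j} = 0
    have hdiag : MeasurableSet {q : ℝ × ℝ | q.1 = q.2} :=
      measurableSet_eq_fun measurable_fst measurable_snd
    have h1 : ν {x : Fin (T₀ + 1) → ℝ | x i = x j}
        = P {ω | S i ω = S j ω} := by
      rw [← hmap, Measure.map_apply hJmeas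
        (measurableSet_eq_fun (measurable_pi_apply i) (measurable_pi_apply j))]
      rfl
    have hIF : IndepFun (S i) (S j) P := hindep.indepFun hij
    have h2 : Measure.map (fun ω => (S i ω, S j ω)) P = μ.prod μ := by
      rw [(indepFun_iff_map_prod_eq_prod_map_map (hmeas i).aemeasurable
        (hmeas j).aemeasurable).mp hIF, hid i, hid j]
    have h3 : P {ω | S i ω = S j ω} = (μ.prod μ) {q : ℝ × ℝ | q.1 = q.2} := by
      rw [← h2, Measure.map_apply ((hmeas i).prodMk (hmeas j)) hdiag]
      rfl
    have h4 : (μ.prod μ) {q : ℝ × ℝ | q.1 = q.2} = 0 := by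
      rw [Measure.prod_apply hdiag]
      have h5 : ∀ a : ℝ, μ (Prod.mk a ⁻¹' {q : ℝ × ℝ | q.1 = q.2}) = 0 := by
        intro a
        have h6 : Prod.mk a ⁻¹' {q : ℝ × ℝ | q.1 = q.2} = {a} := by
          ext b; simp [eq_comm]
        rw [h6]; exact hatomless a
      rw [lintegral_congr h5, lintegral_zero]
    rw [h1, h3, h4]
  -- permutation invariance
  have hswap : ∀ (σ : Equiv.Perm (Fin (T₀ + 1))) (A : Set (Fin (T₀ + 1) → ℝ)),
      MeasurableSet A → ν ((fun x => x ∘ σ) ⁻¹' A) = ν A := by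
    intro σ A hA
    have hmp := measurePreserving_piCongrLeft (fun _ : Fin (T₀ + 1) => μ) σ.symm
    have hco : (MeasurableEquiv.piCongrLeft (fun _ : Fin (T₀ + 1) => ℝ) σ.symm)
        = fun x : Fin (T₀ + 1) → ℝ => x ∘ σ := by
      funext x j
      have h := Equiv.piCongrLeft_apply_apply (fun _ : Fin (T₀ + 1) => ℝ) σ.symm x (σ j)
      rw [MeasurableEquiv.coe_piCongrLeft]
      simp only [Equiv.symm_apply_apply] at h
      exact h
    rw [← hco]
    exact hmp.measure_preimage hA.nullMeasurableSet
  -- all ranks uniform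
  have huniform : ∀ k : ℕ, k ≤ T₀ →
      ν {x : Fin (T₀ + 1) → ℝ | rnk x (Fin.last T₀) = k} = ((T₀ + 1 : ℕ) : ℝ≥0∞)⁻¹ := by
    intro k hk
    set I : Set (Fin (T₀ + 1) → ℝ) := {x | Function.Injective x} with hIdef
    set B : Fin (T₀ + 1) → Set (Fin (T₀ + 1) → ℝ) :=
      fun j => {x | rnk x j = k} with hBdef
    have hBeq : ∀ j, ν (B j) = ν (B (Fin.last T₀)) := by
      intro j
      have h := hswap (Equiv.swap (Fin.last T₀) j) (B (Fin.last T₀)) (hBmeas _ k)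
      have hpre : (fun x : Fin (T₀ + 1) → ℝ => x ∘ (Equiv.swap (Fin.last T₀) j))
          ⁻¹' (B (Fin.last T₀)) = B j := by
        ext x
        simp only [Set.mem_preimage, hBdef, Set.mem_setOf_eq]
        rw [rnk_comp x (Equiv.swap (Fin.last T₀) j) (Fin.last T₀), Equiv.swap_apply_left]
      rw [hpre] at h
      exact h
    have hcover : (⋃ j, B j ∩ I) = I := by
      ext x
      simp only [Set.mem_iUnion, Set.mem_inter_iff, hBdef, Set.mem_setOf_eq, hIdef]
      constructor
      · rintro ⟨j, _, hxI⟩; exact hxI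
      · intro hxI
        obtain ⟨j, hj⟩ := rnk_surj hxI (Nat.lt_succ_of_le hk)
        exact ⟨j, hj, hxI⟩
    have hdisj : Pairwise (Function.onFun Disjoint fun j => B j ∩ I) := by
      intro j j' hne
      refine Set.disjoint_left.mpr ?_
      rintro x ⟨hxB, hxI⟩ ⟨hxB', _⟩
      exact hne (rnk_inj hxI (hxB.trans hxB'.symm))
    have hνI : ν I = 1 := by
      have h := measure_add_measure_compl (μ := ν) hImeas
      rw [hInull, add_zero] at h
      simpa using h
    have hsum : ∑ j : Fin (T₀ + 1), ν (B j ∩ I) = 1 := by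
      rw [← tsum_fintype (L := SummationFilter.unconditional _), ← measure_iUnion hdisj
        (fun j => (hBmeas j k).inter hImeas), hcover, hνI]
    have hBI : ∀ j, ν (B j ∩ I) = ν (B j) :=
      fun j => measure_inter_conull hInull
    have hsum2 : ((T₀ + 1 : ℕ) : ℝ≥0∞) * ν (B (Fin.last T₀)) = 1 := by
      calc ((T₀ + 1 : ℕ) : ℝ≥0∞) * ν (B (Fin.last T₀))
          = ∑ _j : Fin (T₀ + 1), ν (B (Fin.last T₀)) := by
            rw [Finset.sum_const, Finset.card_univ, Fintype.card_fin, nsmul_eq_mul]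
        _ = ∑ j : Fin (T₀ + 1), ν (B j ∩ I) := by
            refine Finset.sum_congr rfl fun j _ => ?_
            rw [hBI j, hBeq j]
        _ = 1 := hsum
    have hn0 : ((T₀ + 1 : ℕ) : ℝ≥0∞) ≠ 0 := by simp
    have hntop : ((T₀ + 1 : ℕ) : ℝ≥0∞) ≠ ⊤ := by simp
    calc ν (B (Fin.last T₀))
        = ((T₀ + 1 : ℕ) : ℝ≥0∞)⁻¹ * (((T₀ + 1 : ℕ) : ℝ≥0∞) * ν (B (Fin.last T₀))) := by
          rw [← mul_assoc, ENNReal.inv_mul_cancel hn0 hntop, one_mul]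
      _ = ((T₀ + 1 : ℕ) : ℝ≥0∞)⁻¹ := by rw [hsum2, mul_one]
  -- rewrite the rejection event
  set m := ⌊τ * T₀⌋₊ with hmdef
  have hT₀pos : (0 : ℝ) < T₀ := by exact_mod_cast hT₀
  have hmle : m ≤ T₀ := by
    have h1 : τ * T₀ ≤ (T₀ : ℝ) := by nlinarith
    calc m ≤ ⌊(T₀ : ℝ)⌋₊ := Nat.floor_le_floor h1
      _ = T₀ := Nat.floor_natCast T₀
  have hset : {ω | p ω ≤ τ} = J ⁻¹' {x | T₀ - rnk x (Fin.last T₀) ≤ m} := by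
    ext ω
    simp only [Set.mem_setOf_eq, Set.mem_preimage, hp ω]
    have hJω : (fun t : Fin T₀ => J ω t.castSucc ≥ J ω (Fin.last T₀))
        = fun t : Fin T₀ => S t.castSucc ω ≥ S (Fin.last T₀) ω := rfl
    have hc := count_eq (J ω)
    simp only [hJω] at hc
    rw [hc, div_le_iff₀ hT₀pos]
    exact (Nat.le_floor_iff (mul_nonneg hτ0 (Nat.cast_nonneg T₀))).symm
  have hA : {x : Fin (T₀ + 1) → ℝ | T₀ - rnk x (Fin.last T₀) ≤ m}
      = ⋃ r ∈ Finset.Icc (T₀ - m) T₀, {x | rnk x (Fin.last T₀) = r} := by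
    ext x
    simp only [Set.mem_setOf_eq, Set.mem_iUnion, Finset.mem_Icc, exists_prop]
    have hle := rnk_le x
    constructor
    · intro h
      exact ⟨rnk x (Fin.last T₀), ⟨by omega, hle⟩, rfl⟩
    · rintro ⟨r, ⟨h1, h2⟩, hr⟩
      omega
  have hAmeas : MeasurableSet {x : Fin (T₀ + 1) → ℝ | T₀ - rnk x (Fin.last T₀) ≤ m} := by
    rw [hA]
    exact Finset.measurableSet_biUnion _ fun r _ => hBmeas _ r
  have hcardIcc : (Finset.Icc (T₀ - m) T₀).card = m + 1 := by
    rw [Nat.card_Icc]; omega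
  have hνA : ν {x : Fin (T₀ + 1) → ℝ | T₀ - rnk x (Fin.last T₀) ≤ m}
      = ((m + 1 : ℕ) : ℝ≥0∞) * ((T₀ + 1 : ℕ) : ℝ≥0∞)⁻¹ := by
    rw [hA, measure_biUnion_finset ?_ (fun r _ => hBmeas _ r)]
    · calc ∑ r ∈ Finset.Icc (T₀ - m) T₀, ν {x | rnk x (Fin.last T₀) = r}
          = ∑ r ∈ Finset.Icc (T₀ - m) T₀, ((T₀ + 1 : ℕ) : ℝ≥0∞)⁻¹ := by
            refine Finset.sum_congr rfl fun r hr => ?_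
            exact huniform r (Finset.mem_Icc.mp hr).2
        _ = ((m + 1 : ℕ) : ℝ≥0∞) * ((T₀ + 1 : ℕ) : ℝ≥0∞)⁻¹ := by
            rw [Finset.sum_const, hcardIcc, nsmul_eq_mul]
    · intro r hr r' hr' hne
      refine Set.disjoint_left.mpr ?_
      rintro x hx hx'
      simp only [Set.mem_setOf_eq] at hx hx'
      exact hne (hx ▸ hx')
  have hPval : (P {ω | p ω ≤ τ}).toReal = ((m : ℝ) + 1) / ((T₀ : ℝ) + 1) := by
    rw [hset, ← Measure.map_apply hJmeas hAmeas, hmap, hνA]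
    rw [ENNReal.toReal_mul, ENNReal.toReal_inv, ENNReal.toReal_natCast,
      ENNReal.toReal_natCast]
    push_cast
    rw [div_eq_mul_inv]
  rw [hPval]
  have hfloor1 : (m : ℝ) ≤ τ * T₀ := Nat.floor_le (mul_nonneg hτ0 (Nat.cast_nonneg T₀))
  have hfloor2 : τ * T₀ < (m : ℝ) + 1 := Nat.lt_floor_add_one _
  have hpos : (0 : ℝ) < (T₀ : ℝ) + 1 := by positivity
  have hrw : ((m : ℝ) + 1) / ((T₀ : ℝ) + 1) - τ
      = (((m : ℝ) + 1) - τ * ((T₀ : ℝ) + 1)) / ((T₀ : ℝ) + 1) := by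
    field_simp
  rw [hrw, abs_div, abs_of_pos hpos]
  have hnum : |((m : ℝ) + 1) - τ * ((T₀ : ℝ) + 1)| ≤ 1 := by
    rw [abs_le]
    constructor <;> nlinarith
  exact (div_le_div_iff_of_pos_right hpos).mpr hnum
end
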